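/- There exists a constant C > 0 such that for all natural numbers n ≥ 1 and all integers k with 0 ≤ k < n, the following holds: if Q_{a,b} and Q_{a',b'} are two distinct squares of K_n such that the words (a_1,…,a_k) = (a'_1,…,a'_k) and (b_1,…,b_k) = (b'_1,…,b'_k) agree up to index k (so both squares lie in a common square of side 4^{-k}) but (a_{k+1}, b_{k+1}) ≠ (a'_{k+1}, b'_{k+1}) (they lie in no common square of side 4^{-k-1}), then ∫₀^π |proj_θ(Q_{a,b}) ∩ proj_θ(Q_{a',b'})| dθ ≤ C · 4^{k − 2n}. -/

import Mathlib

open MeasureTheory Real Set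

noncomputable section

/-- Digit value: `false ↦ 0`, `true ↦ 3`. -/
def dig (b : Bool) : ℝ := if b then 3 else 0

/-- Left endpoint `x_a = ∑ a_j 4^{-j}` of the interval coded by the word `a ∈ {0,3}^n`. -/
def cantorX {n : ℕ} (a : Fin n → Bool) : ℝ :=
  ∑ j : Fin n, dig (a j) * (4 : ℝ) ^ (-((j : ℕ) + 1) : ℤ)

/-- The `n`-th generation `C_n` of the middle-half Cantor set. -/
def cantorC (n : ℕ) : Set ℝ :=
  ⋃ a : Fin n → Bool, Icc (cantorX a) (cantorX a + (4 : ℝ) ^ (-(n : ℤ)))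

/-- The `n`-th generation `K_n = C_n × C_n` of the four-corner Cantor set. -/
def cantorK (n : ℕ) : Set (ℝ × ℝ) := cantorC n ×ˢ cantorC n

/-- The square `Q_{a,b}` of side `4^{-n}` of the `n`-th generation. -/
def cantorSq {n : ℕ} (a b : Fin n → Bool) : Set (ℝ × ℝ) :=
  Icc (cantorX a) (cantorX a + (4 : ℝ) ^ (-(n : ℤ))) ×ˢ
    Icc (cantorX b) (cantorX b + (4 : ℝ) ^ (-(n : ℤ)))

/-- Orthogonal projection in direction `θ`: `proj_θ (x, y) = x cos θ + y sin θ`. -/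
def projAngle (θ : ℝ) (p : ℝ × ℝ) : ℝ := p.1 * Real.cos θ + p.2 * Real.sin θ

/-- The Favard length of a planar set. -/
def favard (E : Set (ℝ × ℝ)) : ℝ :=
  (1 / π) * ∫ θ in (0 : ℝ)..π, (volume (projAngle θ '' E)).toReal

end

/-!
Let `p, p'` be the lower-left corners of the two squares and `s = 4^{-n}` their side.
Since the words first differ at index `k`, the leading differing digit dominates the tail
of the expansion, so `|p - p'| ≥ 4^{-k}/2`. The projections of the two squares are intervals
of length `≤ 4s`, and they can only meet when `|proj_θ (p - p')| ≤ 4s`, i.e. when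
`|cos (θ - arg (p - p'))| ≤ 4s / |p - p'|`; by Jordan's inequality this happens on a set of
angles of measure `O(s / |p - p'|)`. Hence the integral is `O(s² · 4^k) = O(4^{k - 2n})`.
-/

lemma abs_dig_sub_dig_le (x y : Bool) : |dig x - dig y| ≤ 3 := by
  cases x <;> cases y <;> norm_num [dig]

lemma abs_dig_sub_dig_of_ne {x y : Bool} (h : x ≠ y) : |dig x - dig y| = 3 := by
  cases x <;> cases y <;> simp_all [dig]

lemma abs_sum_Ico_mul_inv_four_pow_le {e : ℕ → ℝ} {m n : ℕ} (hmn : m ≤ n)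
    (he : ∀ j, |e j| ≤ 3) : |∑ j ∈ Finset.Ico m n, e j * 4⁻¹ ^ (j + 1)| ≤ 4⁻¹ ^ m :=
  calc |∑ j ∈ Finset.Ico m n, e j * 4⁻¹ ^ (j + 1)|
      ≤ ∑ j ∈ Finset.Ico m n, 3 * (4⁻¹ : ℝ) ^ (j + 1) := by
        refine (Finset.abs_sum_le_sum_abs _ _).trans (Finset.sum_le_sum fun j _ => ?_)
        rw [abs_mul, abs_of_pos (pow_pos (by norm_num : (0 : ℝ) < 4⁻¹) (j + 1))]
        gcongr
        exact he j
    _ = -∑ j ∈ Finset.Ico m n, ((4⁻¹ : ℝ) ^ (j + 1) - 4⁻¹ ^ j) := by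
        rw [← Finset.sum_neg_distrib]
        exact Finset.sum_congr rfl fun j _ => by ring
    _ ≤ 4⁻¹ ^ m := by
        rw [Finset.sum_Ico_sub (fun j => (4⁻¹ : ℝ) ^ j) hmn]
        linarith [pow_nonneg (by norm_num : (0 : ℝ) ≤ 4⁻¹) n]

lemma le_abs_sum_range_mul_inv_four_pow {e : ℕ → ℝ} {k n : ℕ} (hkn : k < n)
    (he : ∀ j, |e j| ≤ 3) (hzero : ∀ j < k, e j = 0) (hk : |e k| = 3) :
    2 * (4⁻¹ : ℝ) ^ (k + 1) ≤ |∑ j ∈ Finset.range n, e j * 4⁻¹ ^ (j + 1)| := by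
  have hsplit : ∑ j ∈ Finset.range n, e j * 4⁻¹ ^ (j + 1)
      = e k * 4⁻¹ ^ (k + 1) + ∑ j ∈ Finset.Ico (k + 1) n, e j * 4⁻¹ ^ (j + 1) := by
    rw [← Finset.sum_range_add_sum_Ico _ hkn, Finset.sum_range_succ,
      Finset.sum_eq_zero fun j hj => by rw [hzero j (Finset.mem_range.1 hj), zero_mul], zero_add]
  have hlead : |e k * 4⁻¹ ^ (k + 1)| = 3 * (4⁻¹ : ℝ) ^ (k + 1) := by
    rw [abs_mul, hk, abs_of_pos (by positivity)]
  have htail : |∑ j ∈ Finset.Ico (k + 1) n, e j * 4⁻¹ ^ (j + 1)| ≤ 4⁻¹ ^ (k + 1) :=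
    abs_sum_Ico_mul_inv_four_pow_le hkn he
  rw [hsplit]
  linarith [abs_sub_abs_le_abs_add (e k * 4⁻¹ ^ (k + 1))
    (∑ j ∈ Finset.Ico (k + 1) n, e j * 4⁻¹ ^ (j + 1))]

lemma le_abs_cantorX_sub_cantorX {n k : ℕ} (hk : k < n) {a a' : Fin n → Bool}
    (hagree : ∀ i : Fin n, (i : ℕ) < k → a i = a' i) (hne : a ⟨k, hk⟩ ≠ a' ⟨k, hk⟩) :
    (4 : ℝ) ^ (-(k : ℤ)) / 2 ≤ |cantorX a - cantorX a'| := by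
  set e : ℕ → ℝ := fun j => if h : j < n then dig (a ⟨j, h⟩) - dig (a' ⟨j, h⟩) else 0
  have hsum : cantorX a - cantorX a' = ∑ j ∈ Finset.range n, e j * 4⁻¹ ^ (j + 1) := by
    rw [cantorX, cantorX, ← Finset.sum_sub_distrib, ← Fin.sum_univ_eq_sum_range]
    refine Finset.sum_congr rfl fun j _ => ?_
    rw [zpow_neg, inv_pow, ← zpow_natCast]
    simp only [e, dif_pos j.isLt]
    push_cast
    ring
  have hbound : ∀ j, |e j| ≤ 3 := fun j => by
    by_cases h : j < n
    · simpa only [e, dif_pos h] using abs_dig_sub_dig_le _ _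
    · simp [e, dif_neg h]
  have hzero : ∀ j < k, e j = 0 := fun j hj => by
    simp only [e, dif_pos (hj.trans hk), hagree ⟨j, hj.trans hk⟩ hj, sub_self]
  have hlead : |e k| = 3 := by simpa only [e, dif_pos hk] using abs_dig_sub_dig_of_ne hne
  rw [hsum]
  convert le_abs_sum_range_mul_inv_four_pow hk hbound hzero hlead using 1
  rw [zpow_neg, zpow_natCast, pow_succ, inv_pow]
  ring

lemma exists_int_abs_sub_le_of_abs_cos_le {u t : ℝ} (h : |cos u| ≤ t) :
    ∃ m : ℤ, |u - (π / 2 + m * π)| ≤ π / 2 ∧ |u - (π / 2 + m * π)| ≤ π / 2 * t := by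
  have hπ := pi_pos
  set m : ℤ := round ((u - π / 2) / π)
  set v := u - (π / 2 + m * π)
  have hv : |v| ≤ π / 2 := by
    rw [show v = ((u - π / 2) / π - m) * π by field_simp; ring, abs_mul, abs_of_pos hπ]
    linarith [mul_le_mul_of_nonneg_right (abs_sub_round ((u - π / 2) / π)) hπ.le]
  have hcos : |cos u| = |sin v| := by
    rw [show u = (v + m * π) + π / 2 by ring, cos_add_pi_div_two, abs_neg, sin_add_int_mul_pi,
      abs_mul, abs_neg_one_zpow, one_mul]
  refine ⟨m, hv, ?_⟩
  calc |v| = π / 2 * (2 / π * |v|) := by field_simp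
    _ ≤ π / 2 * t := by gcongr; exact (mul_abs_le_abs_sin hv).trans (hcos ▸ h)

lemma volume_setOf_abs_cos_sub_le (φ t : ℝ) :
    volume {θ ∈ Icc 0 π | |cos (θ - φ)| ≤ t} ≤ ENNReal.ofReal (3 * π * t) := by
  have hπ := pi_pos
  set c := φ / π
  have hc : c * π = φ := div_mul_cancel₀ φ hπ.ne'
  -- only the zeros `φ + π/2 + mπ` of `cos (· - φ)` within `π/2` of `[0, π]` matter
  set I := Finset.Icc ⌈-c - 1⌉ ⌊1 - c⌋
  have hcover : {θ ∈ Icc 0 π | |cos (θ - φ)| ≤ t} ⊆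
      ⋃ m ∈ I, Icc (φ + π / 2 + m * π - π / 2 * t) (φ + π / 2 + m * π + π / 2 * t) := by
    rintro θ ⟨⟨hθ0, hθπ⟩, hcos⟩
    obtain ⟨m, hm, hmt⟩ := exists_int_abs_sub_le_of_abs_cos_le hcos
    rw [abs_le] at hm hmt
    refine mem_iUnion₂.2 ⟨m, Finset.mem_Icc.2 ⟨Int.ceil_le.2 ?_, Int.le_floor.2 ?_⟩,
      by constructor <;> linarith⟩
    · exact le_of_mul_le_mul_right (by linarith) hπ
    · exact le_of_mul_le_mul_right (by linarith) hπ
  have hcard : I.card ≤ 3 := by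
    have hreal : ((⌊1 - c⌋ - ⌈-c - 1⌉ : ℤ) : ℝ) < 3 := by
      push_cast; linarith [Int.floor_le (1 - c), Int.le_ceil (-c - 1)]
    have : ⌊1 - c⌋ - ⌈-c - 1⌉ < 3 := by exact_mod_cast hreal
    rw [Int.card_Icc]; omega
  calc volume {θ ∈ Icc 0 π | |cos (θ - φ)| ≤ t}
      ≤ ∑ m ∈ I, volume (Icc (φ + π / 2 + m * π - π / 2 * t) (φ + π / 2 + m * π + π / 2 * t)) :=
        (measure_mono hcover).trans (measure_biUnion_finset_le _ _)
    _ = ∑ m ∈ I, ENNReal.ofReal (π * t) :=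
        Finset.sum_congr rfl fun m _ => by rw [Real.volume_Icc]; ring_nf
    _ = I.card * ENNReal.ofReal (π * t) := by rw [Finset.sum_const, nsmul_eq_mul]
    _ ≤ 3 * ENNReal.ofReal (π * t) := by gcongr; exact_mod_cast hcard
    _ = ENNReal.ofReal (3 * π * t) := by
        rw [mul_assoc, ENNReal.ofReal_mul (by norm_num : (0 : ℝ) ≤ 3), ENNReal.ofReal_ofNat]

lemma Complex.norm_mul_cos_sub_arg (z : ℂ) (θ : ℝ) :
    ‖z‖ * Real.cos (θ - z.arg) = z.re * Real.cos θ + z.im * Real.sin θ := by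
  rw [Real.cos_sub, ← Complex.norm_mul_cos_arg, ← Complex.norm_mul_sin_arg]
  ring

section Square

variable {θ x y s : ℝ}

lemma abs_projAngle_sub_le {p : ℝ × ℝ} (hp : p ∈ Icc x (x + s) ×ˢ Icc y (y + s)) :
    |projAngle θ p - projAngle θ (x, y)| ≤ 2 * s := by
  obtain ⟨⟨hx, hx'⟩, hy, hy'⟩ := hp
  have h₁ : |p.1 - x| ≤ s := abs_le.2 ⟨by linarith, by linarith⟩
  have h₂ : |p.2 - y| ≤ s := abs_le.2 ⟨by linarith, by linarith⟩
  have hs : 0 ≤ s := by linarith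
  calc |projAngle θ p - projAngle θ (x, y)| = |(p.1 - x) * cos θ + (p.2 - y) * sin θ| := by
        rw [projAngle, projAngle]; ring_nf
    _ ≤ |p.1 - x| * |cos θ| + |p.2 - y| * |sin θ| := by
        rw [← abs_mul, ← abs_mul]; exact abs_add_le _ _
    _ ≤ s * 1 + s * 1 :=
        add_le_add (mul_le_mul h₁ (abs_cos_le_one θ) (abs_nonneg _) hs)
          (mul_le_mul h₂ (abs_sin_le_one θ) (abs_nonneg _) hs)
    _ = 2 * s := by ring

lemma projAngle_image_square_subset :
    projAngle θ '' (Icc x (x + s) ×ˢ Icc y (y + s)) ⊆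
      Metric.closedBall (projAngle θ (x, y)) (2 * s) := by
  rintro _ ⟨p, hp, rfl⟩
  exact abs_projAngle_sub_le hp

lemma volume_projAngle_image_square_le :
    volume (projAngle θ '' (Icc x (x + s) ×ˢ Icc y (y + s))) ≤ ENNReal.ofReal (4 * s) := by
  refine (measure_mono projAngle_image_square_subset).trans ?_
  rw [Real.volume_closedBall, ← mul_assoc]
  norm_num

lemma abs_projAngle_sub_le_of_inter_nonempty {x' y' : ℝ}
    (h : (projAngle θ '' (Icc x (x + s) ×ˢ Icc y (y + s)) ∩
      projAngle θ '' (Icc x' (x' + s) ×ˢ Icc y' (y' + s))).Nonempty) :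
    |projAngle θ (x, y) - projAngle θ (x', y')| ≤ 4 * s := by
  obtain ⟨w, hw, hw'⟩ := h
  rw [← Real.dist_eq]
  calc dist (projAngle θ (x, y)) (projAngle θ (x', y'))
      ≤ dist (projAngle θ (x, y)) w + dist w (projAngle θ (x', y')) := dist_triangle ..
    _ ≤ 2 * s + 2 * s := add_le_add (Metric.mem_closedBall'.1 (projAngle_image_square_subset hw))
        (Metric.mem_closedBall.1 (projAngle_image_square_subset hw'))
    _ = 4 * s := by ring

end Square

lemma intervalIntegral_le_mul_volume_of_le_indicator {f : ℝ → ℝ} {E : Set ℝ} {M b : ℝ}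
    (hb : 0 ≤ b) (hE : MeasurableSet E) (hf₀ : ∀ θ, 0 ≤ f θ)
    (hf : ∀ θ, f θ ≤ E.indicator (fun _ => M) θ) :
    ∫ θ in (0 : ℝ)..b, f θ ≤ M * (volume (E ∩ Ioc 0 b)).toReal :=
  calc ∫ θ in (0 : ℝ)..b, f θ = ∫ θ in Ioc 0 b, f θ := intervalIntegral.integral_of_le hb
    _ ≤ ∫ θ in Ioc 0 b, E.indicator (fun _ => M) θ :=
        integral_mono_of_nonneg (ae_of_all _ hf₀)
          ((integrableOn_const measure_Ioc_lt_top.ne).indicator hE) (ae_of_all _ hf)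
    _ = M * (volume (E ∩ Ioc 0 b)).toReal := by
        rw [integral_indicator hE, setIntegral_const, measureReal_def, Measure.restrict_apply hE,
          smul_eq_mul, mul_comm]

lemma integral_volume_projAngle_inter_le {x y x' y' s : ℝ} (hs : 0 ≤ s)
    (hne : (x, y) ≠ (x', y')) :
    ∫ θ in (0 : ℝ)..π, (volume (projAngle θ '' (Icc x (x + s) ×ˢ Icc y (y + s)) ∩
      projAngle θ '' (Icc x' (x' + s) ×ˢ Icc y' (y' + s)))).toReal ≤
      48 * π * s ^ 2 / ‖(x - x', y - y')‖ := by
  set Q := Icc x (x + s) ×ˢ Icc y (y + s)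
  set Q' := Icc x' (x' + s) ×ˢ Icc y' (y' + s)
  set ρ := ‖(x - x', y - y')‖
  have hρ : 0 < ρ := norm_pos_iff.2 fun h => hne (by simpa [sub_eq_zero] using h)
  set z : ℂ := ⟨x - x', y - y'⟩
  have hρz : ρ ≤ ‖z‖ := max_le (Complex.abs_re_le_norm z) (Complex.abs_im_le_norm z)
  set E := {θ : ℝ | |cos (θ - z.arg)| ≤ 4 * s / ρ}
  have hE : MeasurableSet E := measurableSet_le (by fun_prop) measurable_const
  have hbound : ∀ θ, (volume (projAngle θ '' Q ∩ projAngle θ '' Q')).toReal ≤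
      E.indicator (fun _ => 4 * s) θ := by
    intro θ
    rcases (projAngle θ '' Q ∩ projAngle θ '' Q').eq_empty_or_nonempty with h | h
    · rw [h, measure_empty, ENNReal.toReal_zero]
      exact indicator_nonneg (fun _ _ => by positivity) θ
    have hθ : θ ∈ E := by
      have hproj := abs_projAngle_sub_le_of_inter_nonempty h
      rw [show projAngle θ (x, y) - projAngle θ (x', y') = ‖z‖ * cos (θ - z.arg) by
        rw [Complex.norm_mul_cos_sub_arg, projAngle, projAngle]; ring, abs_mul, abs_norm] at hproj
      rw [show θ ∈ E ↔ |cos (θ - z.arg)| ≤ 4 * s / ρ from Iff.rfl, le_div_iff₀ hρ]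
      nlinarith [abs_nonneg (cos (θ - z.arg))]
    rw [indicator_of_mem hθ]
    exact ENNReal.toReal_le_of_le_ofReal (by positivity)
      ((measure_mono inter_subset_left).trans volume_projAngle_image_square_le)
  have hE_vol : (volume (E ∩ Ioc 0 π)).toReal ≤ 3 * π * (4 * s / ρ) := by
    have hsub : E ∩ Ioc 0 π ⊆ {θ ∈ Icc 0 π | |cos (θ - z.arg)| ≤ 4 * s / ρ} :=
      fun θ hθ => ⟨Ioc_subset_Icc_self hθ.2, hθ.1⟩
    exact ENNReal.toReal_le_of_le_ofReal (by positivity)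
      ((measure_mono hsub).trans (volume_setOf_abs_cos_sub_le _ _))
  calc _ ≤ 4 * s * (volume (E ∩ Ioc 0 π)).toReal :=
        intervalIntegral_le_mul_volume_of_le_indicator pi_pos.le hE
          (fun _ => ENNReal.toReal_nonneg) hbound
    _ ≤ 4 * s * (3 * π * (4 * s / ρ)) := by gcongr
    _ = 48 * π * s ^ 2 / ρ := by field_simp; ring

/-- There exists `C > 0` such that for all `n ≥ 1` and `0 ≤ k < n`: if two distinct
squares `Q_{a,b}`, `Q_{a',b'}` of `K_n` have words agreeing up to index `k` (so they lie
in a common square of side `4^{-k}`) but `(a_{k+1}, b_{k+1}) ≠ (a'_{k+1}, b'_{k+1})`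
(no common square of side `4^{-k-1}`), then
`∫₀^π |proj_θ(Q_{a,b}) ∩ proj_θ(Q_{a',b'})| dθ ≤ C · 4^{k − 2n}`. -/
theorem integral_projection_intersection_kpair_le : ∃ C : ℝ, 0 < C ∧
    ∀ n : ℕ, 1 ≤ n → ∀ k : ℕ, ∀ hk : k < n, ∀ a b a' b' : Fin n → Bool,
      (∀ i : Fin n, (i : ℕ) < k → a i = a' i ∧ b i = b' i) →
      ¬(a ⟨k, hk⟩ = a' ⟨k, hk⟩ ∧ b ⟨k, hk⟩ = b' ⟨k, hk⟩) →
      (∫ θ in (0 : ℝ)..π,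
        (volume (projAngle θ '' cantorSq a b ∩ projAngle θ '' cantorSq a' b')).toReal) ≤
        C * (4 : ℝ) ^ ((k : ℤ) - 2 * n) := by
  refine ⟨96 * π, by positivity, fun n _ k hk a b a' b' hagree hne => ?_⟩
  have hsep : (4 : ℝ) ^ (-(k : ℤ)) / 2 ≤ ‖(cantorX a - cantorX a', cantorX b - cantorX b')‖ := by
    rcases not_and_or.1 hne with h | h
    · exact (le_abs_cantorX_sub_cantorX hk (fun i hi => (hagree i hi).1) h).trans
        (le_max_left _ _)
    · exact (le_abs_cantorX_sub_cantorX hk (fun i hi => (hagree i hi).2) h).trans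
        (le_max_right _ _)
  have hcorner : (cantorX a, cantorX b) ≠ (cantorX a', cantorX b') := fun h => by
    obtain ⟨ha, hb⟩ := Prod.mk.inj h
    simp only [ha, hb, sub_self, Prod.mk_zero_zero, norm_zero] at hsep
    exact absurd hsep (not_le.2 (by positivity))
  calc _ ≤ 48 * π * ((4 : ℝ) ^ (-(n : ℤ))) ^ 2 /
        ‖(cantorX a - cantorX a', cantorX b - cantorX b')‖ :=
        integral_volume_projAngle_inter_le (by positivity) hcorner
    _ ≤ 48 * π * ((4 : ℝ) ^ (-(n : ℤ))) ^ 2 / ((4 : ℝ) ^ (-(k : ℤ)) / 2) := by gcongr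
    _ = 96 * π * (4 : ℝ) ^ ((k : ℤ) - 2 * n) := by
        rw [zpow_sub₀ (by norm_num), mul_comm (2 : ℤ), zpow_mul, zpow_neg, zpow_neg]
        simp only [zpow_natCast, zpow_ofNat]
        field_simp
        ring
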